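/- Let σ = (σ_0,…,σ_n) be a changemaker vector and let k = (p − |σ|₁)/2 (an integer since p ≡ |σ|₁ mod 2). Then 8·V^σ_k ≥ p − odd(σ). -/

import Mathlib

open Finset

/-- `σ` is a changemaker vector: all entries are positive and every integer `k` with
`0 ≤ k ≤ σ_0 + ⋯ + σ_n` is the sum of a subset of the entries. -/
def IsChangemaker {n : ℕ} (σ : Fin (n + 1) → ℕ) : Prop :=
  (∀ i, 0 < σ i) ∧
    ∀ k : ℕ, k ≤ ∑ i, σ i → ∃ A : Finset (Fin (n + 1)), ∑ i ∈ A, σ i = k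

/-- `Tcm σ m = T^σ_m`, the maximum of `σ·α` over all `α ∈ ℤ_{≥0}^{n+1}` with
`Σ_j α_j (α_j + 1) ≤ 2m` (the maximum exists: the set is nonempty and bounded). -/
noncomputable def Tcm {n : ℕ} (σ : Fin (n + 1) → ℕ) (m : ℕ) : ℕ :=
  sSup {t : ℕ | ∃ α : Fin (n + 1) → ℕ,
    (∑ j, α j * (α j + 1)) ≤ 2 * m ∧ t = ∑ j, σ j * α j}

/-- `Vcm σ i = V^σ_i`, the `i`-th relevant coefficient of `σ`:
the least `m` with `T^σ_m ≥ i` (and `V^σ_0 = 0`). -/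
noncomputable def Vcm {n : ℕ} (σ : Fin (n + 1) → ℕ) (i : ℕ) : ℕ :=
  sInf {m : ℕ | i ≤ Tcm σ m}

/-!
Let `α` attain `T^σ_V` for `V = V^σ_k`, so that `σ·α ≥ k` and `Σ α_j (α_j + 1) ≤ 2V`.
Expanding `(σ_j - 2α_j - 1)² ≥ 0`, and `≥ 1` when `σ_j` is even, gives
`4 σ_j α_j + 2 σ_j ≤ σ_j² + 4 α_j (α_j + 1) + [σ_j odd]`. Summing over `j` and using
`4 σ·α ≥ 4k = 2p - 2|σ|₁` yields `p ≤ 8V + odd(σ)`.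
-/

lemma four_mul_mul_add_two_mul_le (s a : ℕ) :
    4 * (s * a) + 2 * s ≤ s ^ 2 + 4 * (a * (a + 1)) + if Odd s then 1 else 0 := by
  have hsq : (1 : ℤ) - (if Odd s then 1 else 0) ≤ ((s : ℤ) - 2 * a - 1) ^ 2 := by
    split_ifs with hs
    · rw [sub_self]; exact sq_nonneg _
    · have hodd : Odd ((s : ℤ) - 2 * a - 1) := by
        have : Even (s : ℤ) := (Int.even_coe_nat s).2 (Nat.not_odd_iff_even.1 hs)
        exact (this.sub (even_two_mul _)).sub_odd odd_one
      rw [sub_zero, one_le_sq_iff_one_le_abs]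
      exact Int.one_le_abs fun h => by simp [h] at hodd
  zify
  split_ifs at hsq ⊢ <;> push_cast at hsq ⊢ <;> nlinarith

lemma four_mul_sum_mul_add_two_mul_sum_le {ι : Type*} [Fintype ι] (σ α : ι → ℕ) :
    4 * ∑ j, σ j * α j + 2 * ∑ j, σ j ≤
      ∑ j, σ j ^ 2 + 4 * ∑ j, α j * (α j + 1) + #{j | Odd (σ j)} := by
  simpa only [mul_sum, sum_add_distrib, card_filter] using
    sum_le_sum fun j (_ : j ∈ univ) => four_mul_mul_add_two_mul_le (σ j) (α j)

section RelevantCoefficients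

variable {n : ℕ} (σ : Fin (n + 1) → ℕ)

lemma bddAbove_tcm_set (m : ℕ) :
    BddAbove {t : ℕ | ∃ α : Fin (n + 1) → ℕ,
      (∑ j, α j * (α j + 1)) ≤ 2 * m ∧ t = ∑ j, σ j * α j} := by
  refine ⟨∑ j, σ j * (2 * m), ?_⟩
  rintro t ⟨α, hα, rfl⟩
  gcongr with j
  calc α j ≤ α j * (α j + 1) := Nat.le_mul_of_pos_right _ (α j).succ_pos
    _ ≤ ∑ j, α j * (α j + 1) := single_le_sum (f := fun j => α j * (α j + 1)) (fun _ _ => Nat.zero_le _) (mem_univ j)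
    _ ≤ 2 * m := hα

lemma exists_tcm_eq (m : ℕ) :
    ∃ α : Fin (n + 1) → ℕ, ∑ j, α j * (α j + 1) ≤ 2 * m ∧ Tcm σ m = ∑ j, σ j * α j :=
  Nat.sSup_mem (s := {t | ∃ α : Fin (n + 1) → ℕ, _ ∧ t = _}) ⟨0, fun _ => 0, by simp, by simp⟩
    (bddAbove_tcm_set σ m)

lemma le_tcm_vcm_of_le_sum_mul {i : ℕ} (α : Fin (n + 1) → ℕ) (h : i ≤ ∑ j, σ j * α j) :
    i ≤ Tcm σ (Vcm σ i) := by
  refine Nat.sInf_mem (s := {m | i ≤ Tcm σ m}) ⟨∑ j, α j * (α j + 1), ?_⟩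
  exact h.trans (le_csSup (bddAbove_tcm_set σ _) ⟨α, by omega, rfl⟩)

end RelevantCoefficients

theorem stmt_11_general {n : ℕ} (σ : Fin (n + 1) → ℕ)
    (k : ℕ) (hk : 2 * k + (∑ i, σ i) = ∑ i, (σ i) ^ 2) :
    (∑ i, (σ i) ^ 2) ≤
      8 * Vcm σ k + (Finset.univ.filter (fun i => Odd (σ i))).card := by
  obtain ⟨α, hα, hTα⟩ := exists_tcm_eq σ (Vcm σ k)
  have hk_le_dot : k ≤ ∑ j, σ j * α j := by
    refine hTα ▸ le_tcm_vcm_of_le_sum_mul σ σ ?_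
    simp only [← sq]
    omega
  have := four_mul_sum_mul_add_two_mul_sum_le σ α
  omega

theorem stmt_11 {n : ℕ} (σ : Fin (n + 1) → ℕ) (hσ : IsChangemaker σ)
    (k : ℕ) (hk : 2 * k + (∑ i, σ i) = ∑ i, (σ i) ^ 2) :
    (∑ i, (σ i) ^ 2) ≤
      8 * Vcm σ k + (Finset.univ.filter (fun i => Odd (σ i))).card :=
  stmt_11_general σ k hk
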